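/- Let p, q ∈ ℂ[z₁,…,z_d] with p having no zeros in ℍ^d and vanishing to order M > 0 at 0, and suppose f = q/p is bounded on ℍ^d with non-tangential limit b = f*(0) at 0. Then for every v ∈ ℍ^d, the directional derivative D_v f(0) := lim_{r→0⁺} (f(rv) − b)/r exists and equals (Q_{M+1}(v) − b·P_{M+1}(v))/P_M(v), where P_j and Q_j denote the degree-j homogeneous parts of p and q respectively. -/

import Mathlib

/-- `x` is an element of the set `D_z = {|z₁|,…,|z_d|, Im z₁,…,Im z_d}`. -/
def MemDset {d : ℕ} (z : Fin d → ℂ) (x : ℝ) : Prop :=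
  (∃ i, x = ‖z i‖) ∨ (∃ i, x = (z i).im)

/-- `z` lies in the non-tangential approach region
`AR_c = {z ∈ ℍ^d : 1/c ≤ x/y ≤ c for all x, y ∈ D_z}`. -/
def MemAR {d : ℕ} (c : ℝ) (z : Fin d → ℂ) : Prop :=
  (∀ i, 0 < (z i).im) ∧
    ∀ x y : ℝ, MemDset z x → MemDset z y → 1 / c ≤ x / y ∧ x / y ≤ c

/-- `f` has non-tangential limit `ω` at `0` via `ℍ^d`. -/
def NTLimitAtZero {d : ℕ} (f : (Fin d → ℂ) → ℂ) (ω : ℂ) : Prop :=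
  ∀ c : ℝ, 1 ≤ c → ∀ ε > (0 : ℝ), ∃ δ > (0 : ℝ), ∀ z : Fin d → ℂ,
    MemAR c z → (∀ i, ‖z i‖ < δ) → ‖f z - ω‖ < ε


/-!
Along a ray, `p(r v) = r ^ M (P_M(v) + O(r))`. The lowest part `P_M` cannot vanish at a point
`v ∈ ℍ^d` (a Hurwitz argument): on a complex line through `v` on which `P_M` is not identically
zero, its zero at `v` is isolated, so `‖P_M‖` is bounded below on a small circle around `v`.
For small `s > 0` the functions `s⁻ᴹ p(s ·)` converge to `P_M` uniformly on the closed disc, so by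
the minimum modulus principle they would have a zero in it, contradicting the stability of `p`.

The ray `r v` stays in one approach region `AR_c`, so `f(r v) → b`. Dividing by `P_M(v) ≠ 0` this
forces `q - b p` to vanish to order `M + 1` along `v`, and then
`(f(r v) - b) / r = r⁻⁽ᴹ⁺¹⁾ (q - b p)(r v) / (r⁻ᴹ p(r v)) → (Q_{M+1}(v) - b P_{M+1}(v)) / P_M(v)`.
-/

open MvPolynomial Filter Metric Topology

namespace MvPolynomial

variable {σ R : Type*} [CommSemiring R]

theorem IsHomogeneous.eval_smul {φ : MvPolynomial σ R} {n : ℕ} (hφ : φ.IsHomogeneous n)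
    (s : R) (z : σ → R) : eval (s • z) φ = s ^ n * eval z φ := by
  rw [eval_eq, eval_eq, Finset.mul_sum]
  refine Finset.sum_congr rfl fun d hd => ?_
  have hdeg : ∑ i ∈ d.support, d i = n := by
    rw [← hφ (mem_support_iff.mp hd), Finsupp.weight_apply, Finsupp.sum]
    simp
  simp only [Pi.smul_apply, smul_eq_mul, mul_pow, Finset.prod_mul_distrib,
    Finset.prod_pow_eq_pow_sum, hdeg]
  ring

theorem eval_smul_eq_sum_range (φ : MvPolynomial σ R) {N : ℕ} (hN : φ.totalDegree < N)
    (s : R) (z : σ → R) :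
    eval (s • z) φ = ∑ j ∈ Finset.range N, s ^ j * eval z (homogeneousComponent j φ) := by
  conv_lhs => rw [← sum_homogeneousComponent φ]
  rw [map_sum]
  refine (Finset.sum_congr rfl fun j _ =>
    (homogeneousComponent_isHomogeneous j φ).eval_smul s z).trans
    (Finset.sum_subset (Finset.range_subset_range.mpr hN) fun j _ hj => ?_)
  rw [homogeneousComponent_eq_zero j φ (by simpa using hj), map_zero, mul_zero]

/-- `s⁻ᴹ φ(s • z)` when the homogeneous components of `φ` of degree `< M` vanish at `z`
(see `eval_smul_eq_pow_mul_rescaledEval`), written so that it is continuous at `s = 0`. -/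
noncomputable def rescaledEval (φ : MvPolynomial σ R) (M : ℕ) (s : R) (z : σ → R) : R :=
  ∑ j ∈ Finset.range (φ.totalDegree + 1), s ^ j * eval z (homogeneousComponent (M + j) φ)

theorem eval_smul_eq_pow_mul_rescaledEval {φ : MvPolynomial σ R} {M : ℕ} {z : σ → R}
    (hmin : ∀ j < M, eval z (homogeneousComponent j φ) = 0) (s : R) :
    eval (s • z) φ = s ^ M * rescaledEval φ M s z := by
  rw [eval_smul_eq_sum_range φ (N := M + (φ.totalDegree + 1)) (by omega), Finset.sum_range_add,
    Finset.sum_eq_zero fun j hj => by rw [hmin j (Finset.mem_range.mp hj), mul_zero],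
    zero_add, rescaledEval, Finset.mul_sum]
  simp only [pow_add, mul_assoc]

@[simp]
theorem rescaledEval_zero (φ : MvPolynomial σ R) (M : ℕ) (z : σ → R) :
    rescaledEval φ M 0 z = eval z (homogeneousComponent M φ) := by
  simp [rescaledEval, Finset.sum_range_succ']

theorem continuous_rescaledEval [TopologicalSpace R] [IsTopologicalSemiring R]
    (φ : MvPolynomial σ R) (M : ℕ) :
    Continuous fun x : R × (σ → R) => rescaledEval φ M x.1 x.2 :=
  continuous_finsetSum _ fun j _ =>
    (continuous_fst.pow j).mul ((continuous_eval _).comp continuous_snd)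

end MvPolynomial

theorem DiffContOnCl.exists_mem_closedBall_eq_zero {g : ℂ → ℂ} {c : ℂ} {ρ : ℝ} (hρ : 0 < ρ)
    (hg : DiffContOnCl ℂ g (ball c ρ)) (hlt : ∀ z ∈ sphere c ρ, ‖g c‖ < ‖g z‖) :
    ∃ z ∈ closedBall c ρ, g z = 0 := by
  by_contra! hne
  have hinv : DiffContOnCl ℂ (fun z => (g z)⁻¹) (ball c ρ) :=
    hg.inv fun z hz => hne z (closure_ball_subset_closedBall hz)
  obtain ⟨z, hz, hmax⟩ :=
    Complex.exists_mem_frontier_isMaxOn_norm isBounded_ball (nonempty_ball.mpr hρ) hinv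
  rw [frontier_ball c hρ.ne'] at hz
  have hc : ‖(g c)⁻¹‖ ≤ ‖(g z)⁻¹‖ := hmax (subset_closure (mem_ball_self hρ))
  rw [norm_inv, norm_inv] at hc
  exact (hlt z hz).not_ge <|
    (inv_le_inv₀ (norm_pos_iff.mpr (hne c (mem_closedBall_self hρ.le)))
      (norm_pos_iff.mpr (hne z (sphere_subset_closedBall hz)))).mp hc

theorem AnalyticOnNhd.exists_closedBall_subset_forall_sphere_le_norm {φ : ℂ → ℂ}
    (hφ : AnalyticOnNhd ℂ φ Set.univ) {a : ℂ} (ha : φ a ≠ 0) {c : ℂ} {U : Set ℂ}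
    (hU : U ∈ 𝓝 c) :
    ∃ ρ > 0, ∃ m > 0, closedBall c ρ ⊆ U ∧ ∀ z ∈ sphere c ρ, m ≤ ‖φ z‖ := by
  rcases (hφ c trivial).eventually_eq_zero_or_eventually_ne_zero with hzero | hne
  · exact absurd (hφ.eqOn_zero_of_preconnected_of_eventuallyEq_zero isPreconnected_univ
      trivial hzero trivial) ha
  obtain ⟨ε, hε, hball⟩ := Metric.mem_nhds_iff.mp
    (inter_mem hU (eventually_nhdsWithin_iff.mp hne))
  have hsub : closedBall c (ε / 2) ⊆ ball c ε := closedBall_subset_ball (half_lt_self hε)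
  have hne' : ∀ z ∈ sphere c (ε / 2), φ z ≠ 0 := fun z hz =>
    (hball (hsub (sphere_subset_closedBall hz))).2 (ne_of_mem_sphere hz (half_pos hε).ne')
  obtain ⟨z₀, hz₀, hmin⟩ := (isCompact_sphere c (ε / 2)).exists_isMinOn
    (NormedSpace.sphere_nonempty.mpr (half_pos hε).le)
    (hφ.continuousOn.mono (Set.subset_univ _)).norm
  exact ⟨ε / 2, half_pos hε, ‖φ z₀‖, norm_pos_iff.mpr (hne' z₀ hz₀),
    fun z hz => (hball (hsub hz)).1, fun z hz => hmin hz⟩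

theorem IsCompact.exists_pos_forall_norm_sub_lt {X : Type*} [TopologicalSpace X] {K : Set X}
    (hK : IsCompact K) {G : ℂ → X → ℂ} (hG : Continuous fun x : ℂ × X => G x.1 x.2) {ε : ℝ}
    (hε : 0 < ε) : ∃ s : ℝ, 0 < s ∧ ∀ x ∈ K, ‖G s x - G 0 x‖ < ε := by
  have hnear : ∀ᶠ s in 𝓝 (0 : ℂ), ∀ x ∈ K, ‖G s x - G 0 x‖ < ε :=
    hK.eventually_forall_of_forall_eventually fun x _ =>
      ContinuousAt.eventually_lt (by fun_prop) continuousAt_const (by simpa using hε)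
  have hreal : Tendsto (fun s : ℝ => (s : ℂ)) (𝓝[>] 0) (𝓝 0) :=
    (Complex.continuous_ofReal.tendsto' 0 0 Complex.ofReal_zero).mono_left nhdsWithin_le_nhds
  obtain ⟨s, hs, hpos⟩ := (hreal.eventually hnear |>.and eventually_mem_nhdsWithin).exists
  exact ⟨s, hpos, hs⟩

theorem eval_homogeneousComponent_ne_zero_of_forall_im_pos {σ : Type*} [Finite σ]
    {p : MvPolynomial σ ℂ} {M : ℕ}
    (hstable : ∀ z : σ → ℂ, (∀ i, 0 < (z i).im) → eval z p ≠ 0)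
    (hM : homogeneousComponent M p ≠ 0) (hMmin : ∀ j < M, homogeneousComponent j p = 0)
    {v : σ → ℂ} (hv : ∀ i, 0 < (v i).im) : eval v (homogeneousComponent M p) ≠ 0 := by
  intro hv0
  have := Fintype.ofFinite σ
  obtain ⟨z₀, hz₀⟩ : ∃ z₀, eval z₀ (homogeneousComponent M p) ≠ 0 := by
    by_contra! h
    exact hM (MvPolynomial.funext fun z => by simpa using h z)
  set L : ℂ → σ → ℂ := fun l => v + l • (z₀ - v) with hL
  have hLcont : Continuous L := by fun_prop
  have hLan : ∀ ψ : MvPolynomial σ ℂ, AnalyticOnNhd ℂ (fun l => eval (L l) ψ) Set.univ :=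
    fun ψ l _ => (AnalyticOnNhd.eval_mvPolynomial ψ (L l) trivial).comp
      (analyticAt_const.add (analyticAt_id.smul analyticAt_const))
  have hU : {l | ∀ i, 0 < (L l i).im} ∈ 𝓝 0 := by
    refine IsOpen.mem_nhds ?_ (by simpa [hL] using hv)
    simp only [Set.ofPred_forall]
    exact isOpen_iInter_of_finite fun i =>
      isOpen_lt continuous_const (Complex.continuous_im.comp ((continuous_apply i).comp hLcont))
  obtain ⟨ρ, hρ, m, hm, hball, hsphere⟩ :=
    (hLan _).exists_closedBall_subset_forall_sphere_le_norm (a := 1) (by simpa [hL] using hz₀) hU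
  set G : ℂ → ℂ → ℂ := fun s l => rescaledEval p M s (L l)
  have hG0 : ∀ l, G 0 l = eval (L l) (homogeneousComponent M p) := fun l => rescaledEval_zero ..
  obtain ⟨s, hs, happrox⟩ := (isCompact_closedBall (0 : ℂ) ρ).exists_pos_forall_norm_sub_lt
    (G := G) ((continuous_rescaledEval p M).comp (continuous_fst.prodMk
      (hLcont.comp continuous_snd))) (half_pos hm)
  have hGdiff : Differentiable ℂ (G s) := Differentiable.fun_sum fun j _ =>
    (differentiable_const _).mul fun l => (hLan _ l trivial).differentiableAt
  -- `G s` is uniformly within `m / 2` of `G 0`, which vanishes at the centre and has modulus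
  -- at least `m` on the circle.
  obtain ⟨l, hl, hzero⟩ := hGdiff.diffContOnCl.exists_mem_closedBall_eq_zero hρ fun z hz => by
    have hcentre := happrox 0 (mem_closedBall_self hρ.le)
    have hcircle := happrox z (sphere_subset_closedBall hz)
    rw [hG0, hL] at hcentre
    simp only [zero_smul, add_zero, hv0, sub_zero] at hcentre
    have hlow := hsphere z hz
    rw [← hG0] at hlow
    have := norm_sub_norm_le (G 0 z) (G s z)
    rw [norm_sub_rev] at this
    linarith
  refine hstable ((s : ℂ) • L l) (fun i => ?_) ?_
  · simpa [Complex.im_ofReal_mul] using mul_pos hs (hball hl i)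
  · rw [eval_smul_eq_pow_mul_rescaledEval (fun j hj => by rw [hMmin j hj, map_zero])]
    exact mul_eq_zero_of_right _ hzero

theorem MemAR.smul {d : ℕ} {c : ℝ} {z : Fin d → ℂ} (hz : MemAR c z) {r : ℝ} (hr : 0 < r) :
    MemAR c ((r : ℂ) • z) := by
  have hscale : ∀ x, MemDset ((r : ℂ) • z) x → ∃ y, MemDset z y ∧ x = r * y := by
    rintro x (⟨i, rfl⟩ | ⟨i, rfl⟩)
    · exact ⟨_, Or.inl ⟨i, rfl⟩, by simp [abs_of_pos hr]⟩
    · exact ⟨_, Or.inr ⟨i, rfl⟩, by simp⟩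
  refine ⟨fun i => by simpa using mul_pos hr (hz.1 i), fun x y hx hy => ?_⟩
  obtain ⟨x', hx', rfl⟩ := hscale x hx
  obtain ⟨y', hy', rfl⟩ := hscale y hy
  rw [mul_div_mul_left _ _ hr.ne']
  exact hz.2 x' y' hx' hy'

theorem exists_memAR {d : ℕ} {z : Fin d → ℂ} (hz : ∀ i, 0 < (z i).im) :
    ∃ c, 1 ≤ c ∧ MemAR c z := by
  have hpos : ∀ x, MemDset z x → 0 < x := by
    rintro x (⟨i, rfl⟩ | ⟨i, rfl⟩)
    · exact (hz i).trans_le (Complex.im_le_norm _)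
    · exact hz i
  have hfin : {x | MemDset z x}.Finite := by
    refine ((Set.finite_range fun i => ‖z i‖).union (Set.finite_range fun i => (z i).im)).subset ?_
    rintro x (⟨i, rfl⟩ | ⟨i, rfl⟩)
    exacts [Or.inl ⟨i, rfl⟩, Or.inr ⟨i, rfl⟩]
  obtain ⟨C, hC⟩ := (hfin.image2 (· / ·) hfin).bddAbove
  have hratio : ∀ x y, MemDset z x → MemDset z y → x / y ≤ max 1 C := fun x y hx hy =>
    (hC (Set.mem_image2_of_mem hx hy)).trans (le_max_right _ _)
  refine ⟨max 1 C, le_max_left _ _, hz, fun x y hx hy => ⟨?_, hratio x y hx hy⟩⟩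
  rw [one_div_le (by positivity) (div_pos (hpos x hx) (hpos y hy)), one_div_div]
  exact hratio y x hy hx

theorem NTLimitAtZero.tendsto_ofReal_smul {d : ℕ} {f : (Fin d → ℂ) → ℂ} {ω : ℂ}
    (hf : NTLimitAtZero f ω) {v : Fin d → ℂ} (hv : ∀ i, 0 < (v i).im) :
    Tendsto (fun r : ℝ => f ((r : ℂ) • v)) (𝓝[>] 0) (𝓝 ω) := by
  obtain ⟨c, hc, hvc⟩ := exists_memAR hv
  have hsmall : Tendsto (fun r : ℝ => (r : ℂ) • v) (𝓝[>] 0) (𝓝 0) :=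
    ((Complex.continuous_ofReal.smul continuous_const).tendsto' 0 0 (by simp)).mono_left
      nhdsWithin_le_nhds
  refine Metric.tendsto_nhds.mpr fun ε hε => ?_
  obtain ⟨δ, hδ, hf⟩ := hf c hc ε hε
  filter_upwards [hsmall.eventually (ball_mem_nhds 0 hδ), self_mem_nhdsWithin] with r hr hrpos
  rw [dist_eq_norm]
  exact hf _ (hvc.smul hrpos) fun i =>
    (norm_le_pi_norm _ i).trans_lt (by simpa using hr)

section Ray

variable {σ : Type*}

theorem tendsto_rescaledEval_ofReal (φ : MvPolynomial σ ℂ) (M : ℕ) (z : σ → ℂ) :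
    Tendsto (fun r : ℝ => rescaledEval φ M (r : ℂ) z) (𝓝[>] 0)
      (𝓝 (eval z (homogeneousComponent M φ))) := by
  have hcont : Continuous fun r : ℝ => rescaledEval φ M (r : ℂ) z :=
    (continuous_rescaledEval φ M).comp (Complex.continuous_ofReal.prodMk continuous_const)
  simpa using (hcont.tendsto 0).mono_left nhdsWithin_le_nhds

theorem eval_homogeneousComponent_eq_zero_of_tendsto {φ : MvPolynomial σ ℂ} {z : σ → ℂ} {M : ℕ}
    (h : Tendsto (fun r : ℝ => eval ((r : ℂ) • z) φ / (r : ℂ) ^ M) (𝓝[>] 0) (𝓝 0)) :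
    ∀ j ≤ M, eval z (homogeneousComponent j φ) = 0 := by
  intro j
  induction j using Nat.strong_induction_on with
  | _ j ih =>
    intro hj
    have hfactor : ∀ᶠ r : ℝ in 𝓝[>] 0,
        (r : ℂ) ^ (M - j) * (eval ((r : ℂ) • z) φ / (r : ℂ) ^ M) = rescaledEval φ j r z := by
      filter_upwards [self_mem_nhdsWithin] with r hr
      have hr0 : (r : ℂ) ≠ 0 := Complex.ofReal_ne_zero.mpr (ne_of_gt hr)
      have hsplit : (r : ℂ) ^ M = (r : ℂ) ^ (M - j) * (r : ℂ) ^ j := by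
        rw [← pow_add, Nat.sub_add_cancel hj]
      rw [eval_smul_eq_pow_mul_rescaledEval fun i hi => ih i hi (by omega), hsplit]
      field_simp
    have hpow : Tendsto (fun r : ℝ => (r : ℂ) ^ (M - j)) (𝓝[>] 0) (𝓝 (((0 : ℝ) : ℂ) ^ (M - j))) :=
      ((Complex.continuous_ofReal.pow _).tendsto 0).mono_left nhdsWithin_le_nhds
    have hzero := (hpow.mul h).congr' hfactor
    rw [mul_zero] at hzero
    exact tendsto_nhds_unique (tendsto_rescaledEval_ofReal φ j z) hzero

theorem tendsto_slope_eval_div_eval_ofReal_smul {p q : MvPolynomial σ ℂ} {M : ℕ} {v : σ → ℂ}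
    {b : ℂ} (hmin : ∀ j < M, eval v (homogeneousComponent j p) = 0)
    (hM : eval v (homogeneousComponent M p) ≠ 0)
    (hlim : Tendsto (fun r : ℝ => eval ((r : ℂ) • v) q / eval ((r : ℂ) • v) p) (𝓝[>] 0) (𝓝 b)) :
    Tendsto (fun r : ℝ => (eval ((r : ℂ) • v) q / eval ((r : ℂ) • v) p - b) / r) (𝓝[>] 0)
      (𝓝 ((eval v (homogeneousComponent (M + 1) q)
          - b * eval v (homogeneousComponent (M + 1) p)) / eval v (homogeneousComponent M p))) := by
  set R := q - b • p with hR
  have hR1 : eval v (homogeneousComponent (M + 1) R) = eval v (homogeneousComponent (M + 1) q)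
      - b * eval v (homogeneousComponent (M + 1) p) := by simp [hR]
  have hevalR : ∀ x, eval x R = eval x q - b * eval x p := fun x => by simp [hR]
  have hP := tendsto_rescaledEval_ofReal p M v
  have hgood : ∀ᶠ r : ℝ in 𝓝[>] 0, (r : ℂ) ≠ 0 ∧ rescaledEval p M r v ≠ 0 :=
    (eventually_mem_nhdsWithin.mono fun r hr => Complex.ofReal_ne_zero.mpr (ne_of_gt hr)).and
      (hP.eventually_ne hM)
  have hRsmall : Tendsto (fun r : ℝ => eval ((r : ℂ) • v) R / (r : ℂ) ^ M) (𝓝[>] 0) (𝓝 0) := by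
    have hlim' := (hlim.sub_const b).mul hP
    rw [sub_self, zero_mul] at hlim'
    refine hlim'.congr' (hgood.mono fun r ⟨hr, hh⟩ => ?_)
    dsimp only
    rw [hevalR, eval_smul_eq_pow_mul_rescaledEval hmin]
    field_simp
  have hRmin : ∀ j < M + 1, eval v (homogeneousComponent j R) = 0 := fun j hj =>
    eval_homogeneousComponent_eq_zero_of_tendsto hRsmall j (by omega)
  have hslope := (tendsto_rescaledEval_ofReal R (M + 1) v).div hP hM
  rw [hR1] at hslope
  refine hslope.congr' (hgood.mono fun r ⟨hr, hh⟩ => ?_)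
  dsimp only [Pi.div_apply]
  have hq := eval_smul_eq_pow_mul_rescaledEval hRmin (r : ℂ)
  rw [hevalR, eval_smul_eq_pow_mul_rescaledEval hmin, sub_eq_iff_eq_add] at hq
  rw [eval_smul_eq_pow_mul_rescaledEval hmin, hq]
  field_simp
  ring

end Ray

theorem boundary_directional_derivative_general (d : ℕ)
    (p q : MvPolynomial (Fin d) ℂ) (M : ℕ)
    (hstable : ∀ z : Fin d → ℂ, (∀ i, 0 < (z i).im) → MvPolynomial.eval z p ≠ 0)
    (hM : MvPolynomial.homogeneousComponent M p ≠ 0)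
    (hMmin : ∀ j < M, MvPolynomial.homogeneousComponent j p = 0)
    (b : ℂ)
    (hlim : NTLimitAtZero (fun z => MvPolynomial.eval z q / MvPolynomial.eval z p) b)
    (v : Fin d → ℂ) (hv : ∀ i, 0 < (v i).im) :
    Filter.Tendsto
      (fun r : ℝ =>
        (MvPolynomial.eval (fun i => (r : ℂ) * v i) q /
            MvPolynomial.eval (fun i => (r : ℂ) * v i) p - b) / (r : ℂ))
      (nhdsWithin 0 (Set.Ioi 0))
      (nhds ((MvPolynomial.eval v (MvPolynomial.homogeneousComponent (M + 1) q)
          - b * MvPolynomial.eval v (MvPolynomial.homogeneousComponent (M + 1) p)) /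
        MvPolynomial.eval v (MvPolynomial.homogeneousComponent M p))) :=
  tendsto_slope_eval_div_eval_ofReal_smul (fun j hj => by rw [hMmin j hj, map_zero])
    (eval_homogeneousComponent_ne_zero_of_forall_im_pos hstable hM hMmin hv)
    (hlim.tendsto_ofReal_smul hv)

/-- **Theorem (existence and formula for boundary directional derivatives).**
Let `p, q ∈ ℂ[z₁,…,z_d]` with `p` zero-free on `ℍ^d` and vanishing to order
`M > 0` at `0`, and suppose `f = q/p` is bounded on `ℍ^d` with non-tangential
limit `b` at `0`.  Then for every `v ∈ ℍ^d` the directional derivative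
`D_v f(0) = lim_{r→0⁺} (f(rv) - b)/r` exists and equals
`(Q_{M+1}(v) - b P_{M+1}(v)) / P_M(v)`. -/
theorem boundary_directional_derivative (d : ℕ)
    (p q : MvPolynomial (Fin d) ℂ) (M : ℕ) (hMpos : 0 < M)
    (hstable : ∀ z : Fin d → ℂ, (∀ i, 0 < (z i).im) → MvPolynomial.eval z p ≠ 0)
    (hp0 : MvPolynomial.eval (0 : Fin d → ℂ) p = 0)
    (hM : MvPolynomial.homogeneousComponent M p ≠ 0)
    (hMmin : ∀ j < M, MvPolynomial.homogeneousComponent j p = 0)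
    (hbd : ∃ C : ℝ, ∀ z : Fin d → ℂ, (∀ i, 0 < (z i).im) →
      ‖MvPolynomial.eval z q / MvPolynomial.eval z p‖ ≤ C)
    (b : ℂ)
    (hlim : NTLimitAtZero (fun z => MvPolynomial.eval z q / MvPolynomial.eval z p) b)
    (v : Fin d → ℂ) (hv : ∀ i, 0 < (v i).im) :
    Filter.Tendsto
      (fun r : ℝ =>
        (MvPolynomial.eval (fun i => (r : ℂ) * v i) q /
            MvPolynomial.eval (fun i => (r : ℂ) * v i) p - b) / (r : ℂ))
      (nhdsWithin 0 (Set.Ioi 0))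
      (nhds ((MvPolynomial.eval v (MvPolynomial.homogeneousComponent (M + 1) q)
          - b * MvPolynomial.eval v (MvPolynomial.homogeneousComponent (M + 1) p)) /
        MvPolynomial.eval v (MvPolynomial.homogeneousComponent M p))) :=
  boundary_directional_derivative_general d p q M hstable hM hMmin b hlim v hv
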